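/- For all real numbers $u_x, u_y, u_z$ and $s_x, s_y, s_z$, defining $B_{pq} = \cosh(u_p - u_q) + \tfrac{1}{2} e^{u_p+u_q}(s_p - s_q)^2$ for any pair of indices, one has $B_{xz} \le 2\, B_{xy}\, B_{yz}$. -/

import Mathlib

/-!
`B_pq` is the hyperbolic cosine of the distance in the upper half-plane between the points
`s_p + i e^{-u_p}` and `s_q + i e^{-u_q}`. By the triangle inequality and monotonicity of `cosh`
on `[0, ∞)`, `B_xz ≤ cosh (d_xy + d_yz) = cosh d_xy cosh d_yz + sinh d_xy sinh d_yz`, and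
`|sinh| ≤ cosh` bounds this by `2 B_xy B_yz`.
-/

open Real UpperHalfPlane

theorem Real.abs_sinh_le_cosh (x : ℝ) : |sinh x| ≤ cosh x := by
  rw [abs_sinh, ← cosh_abs x]
  exact (sinh_lt_cosh _).le

theorem Real.cosh_add_le_two_mul_cosh_mul_cosh (a b : ℝ) : cosh (a + b) ≤ 2 * cosh a * cosh b := by
  have hsinh : sinh a * sinh b ≤ cosh a * cosh b := calc
    sinh a * sinh b ≤ |sinh a| * |sinh b| := by rw [← abs_mul]; exact le_abs_self _
    _ ≤ cosh a * cosh b :=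
      mul_le_mul (abs_sinh_le_cosh a) (abs_sinh_le_cosh b) (abs_nonneg _) (cosh_pos a).le
  rw [cosh_add]
  linarith

namespace UpperHalfPlane

theorem cosh_dist_le_two_mul_cosh_dist_mul_cosh_dist (x y z : ℍ) :
    cosh (dist x z) ≤ 2 * cosh (dist x y) * cosh (dist y z) := calc
  cosh (dist x z) ≤ cosh (dist x y + dist y z) := by
    rw [cosh_le_cosh, abs_of_nonneg dist_nonneg, abs_of_nonneg (by positivity)]
    exact dist_triangle x y z
  _ ≤ 2 * cosh (dist x y) * cosh (dist y z) := cosh_add_le_two_mul_cosh_mul_cosh _ _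

noncomputable def ofLogCoords (u s : ℝ) : ℍ := ⟨⟨s, exp (-u)⟩, exp_pos _⟩

theorem cosh_dist_ofLogCoords (u v s t : ℝ) :
    cosh (dist (ofLogCoords u s) (ofLogCoords v t)) =
      cosh (u - v) + (1/2) * exp (u + v) * (s - t) ^ 2 := by
  rw [cosh_dist']
  simp only [ofLogCoords, re, im, cosh_eq, exp_neg, exp_sub, exp_add]
  field_simp
  ring

end UpperHalfPlane

/-- For all real numbers `u_x, u_y, u_z` and `s_x, s_y, s_z`, defining
`B_{pq} = cosh(u_p - u_q) + (1/2) e^{u_p+u_q}(s_p - s_q)^2`, one has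
`B_{xz} ≤ 2 B_{xy} B_{yz}`. -/
theorem stmt0 (ux uy uz sx sy sz : ℝ) :
    Real.cosh (ux - uz) + (1/2) * Real.exp (ux + uz) * (sx - sz)^2 ≤
      2 * (Real.cosh (ux - uy) + (1/2) * Real.exp (ux + uy) * (sx - sy)^2)
        * (Real.cosh (uy - uz) + (1/2) * Real.exp (uy + uz) * (sy - sz)^2) := by
  simp only [← cosh_dist_ofLogCoords]
  exact cosh_dist_le_two_mul_cosh_dist_mul_cosh_dist _ _ _
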